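/- For scalars (ε_1,...,ε_n) ∈ {0,1}^n, if q_{in} = (∏_{1≤p<i} q_{pi})·(∏_{i<p≤n−1} q_{ip}^{-1}) holds for all 1 ≤ i ≤ n−1, then ∏_{1≤i<j≤n} q_{ij}^{ε_j − ε_i} = 1. -/

import Mathlib

/-!
Write `C j = ∏_{i<j} q i j` and `R i = ∏_{j>i} q i j` for the column and row products of the
strictly upper triangular part of `q`. Splitting `q^(ε_j - ε_i) = q^(ε_j) / q^(ε_i)` gives
`∏_{i<j} q i j ^ (ε j - ε i) = (∏_j C j ^ ε j) / (∏_i R i ^ ε i)`, so it suffices that `C = R`.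
The hypothesis says exactly `C i = R i` for every index below the last one, and since
`∏_j C j = ∏_i R i` (both are the product of all entries), the remaining equation at the last
index follows by cancellation.
-/

open Finset

section UpperTriangular

variable {ι : Type*} [Fintype ι] [LinearOrder ι]

def upperColProd {M : Type*} [CommMonoid M] (f : ι → ι → M) (j : ι) : M :=
  ∏ i ∈ univ.filter (· < j), f i j

def upperRowProd {M : Type*} [CommMonoid M] (f : ι → ι → M) (i : ι) : M :=
  ∏ j ∈ univ.filter (i < ·), f i j

section CommMonoid

variable {M : Type*} [CommMonoid M]

theorem prod_filter_lt_eq_prod_upperRowProd (f : ι → ι → M) :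
    ∏ p ∈ univ.filter (fun p : ι × ι => p.1 < p.2), f p.1 p.2 = ∏ i, upperRowProd f i := by
  rw [prod_filter, Fintype.prod_prod_type]
  exact prod_congr rfl fun i _ => (prod_filter _ _).symm

theorem prod_filter_lt_eq_prod_upperColProd (f : ι → ι → M) :
    ∏ p ∈ univ.filter (fun p : ι × ι => p.1 < p.2), f p.1 p.2 = ∏ j, upperColProd f j := by
  rw [prod_filter_lt_eq_prod_upperRowProd]
  exact prod_comm' fun i j => by simp

end CommMonoid

section CommGroupWithZero

variable {G₀ : Type*} [CommGroupWithZero G₀] {f : ι → ι → G₀}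

theorem upperColProd_ne_zero (hf : ∀ i j, i < j → f i j ≠ 0) (j : ι) : upperColProd f j ≠ 0 :=
  prod_ne_zero_iff.2 fun i hi => hf i j (mem_filter.1 hi).2

theorem upperRowProd_ne_zero (hf : ∀ i j, i < j → f i j ≠ 0) (i : ι) : upperRowProd f i ≠ 0 :=
  prod_ne_zero_iff.2 fun j hj => hf i j (mem_filter.1 hj).2

/-- `∏_j C j = ∏_i R i` determines any one equation `C k = R k` from all the others. -/
theorem upperColProd_eq_upperRowProd_of_forall_ne (hf : ∀ i j, i < j → f i j ≠ 0) {k : ι}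
    (h : ∀ i, i ≠ k → upperColProd f i = upperRowProd f i) (i : ι) :
    upperColProd f i = upperRowProd f i := by
  rcases ne_or_eq i k with hik | rfl
  · exact h i hik
  have hrest : ∏ j ∈ univ.erase i, upperColProd f j = ∏ j ∈ univ.erase i, upperRowProd f j :=
    prod_congr rfl fun j hj => h j (ne_of_mem_erase hj)
  have htotal : ∏ j, upperColProd f j = ∏ j, upperRowProd f j := by
    rw [← prod_filter_lt_eq_prod_upperColProd, prod_filter_lt_eq_prod_upperRowProd]
  rw [← mul_prod_erase univ _ (mem_univ i), ← mul_prod_erase univ _ (mem_univ i), hrest] at htotal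
  exact mul_right_cancel₀ (prod_ne_zero_iff.2 fun j _ => upperRowProd_ne_zero hf j) htotal

theorem prod_filter_lt_zpow_sub (hf : ∀ i j, i < j → f i j ≠ 0) (ε : ι → ℤ) :
    ∏ p ∈ univ.filter (fun p : ι × ι => p.1 < p.2), f p.1 p.2 ^ (ε p.2 - ε p.1) =
      (∏ j, upperColProd f j ^ ε j) / ∏ i, upperRowProd f i ^ ε i := by
  calc ∏ p ∈ univ.filter (fun p : ι × ι => p.1 < p.2), f p.1 p.2 ^ (ε p.2 - ε p.1)
      = ∏ p ∈ univ.filter (fun p : ι × ι => p.1 < p.2),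
          f p.1 p.2 ^ ε p.2 / f p.1 p.2 ^ ε p.1 :=
        prod_congr rfl fun p hp => zpow_sub₀ (hf _ _ (mem_filter.1 hp).2) _ _
    _ = (∏ j, upperColProd (fun i j => f i j ^ ε j) j) /
          ∏ i, upperRowProd (fun i j => f i j ^ ε i) i := by
        rw [prod_div_distrib, prod_filter_lt_eq_prod_upperColProd (fun i j => f i j ^ ε j),
          prod_filter_lt_eq_prod_upperRowProd (fun i j => f i j ^ ε i)]
    _ = (∏ j, upperColProd f j ^ ε j) / ∏ i, upperRowProd f i ^ ε i := by
        simp only [upperColProd, upperRowProd, prod_zpow]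

theorem prod_filter_lt_zpow_sub_eq_one (hf : ∀ i j, i < j → f i j ≠ 0) (ε : ι → ℤ)
    (h : ∀ i, upperColProd f i = upperRowProd f i) :
    ∏ p ∈ univ.filter (fun p : ι × ι => p.1 < p.2), f p.1 p.2 ^ (ε p.2 - ε p.1) = 1 := by
  rw [prod_filter_lt_zpow_sub hf, funext h]
  exact div_self (prod_ne_zero_iff.2 fun i _ => zpow_ne_zero _ (upperRowProd_ne_zero hf i))

theorem upperRowProd_eq_mul_prod {k i : ι} (hk : IsTop k) (hik : i < k) :
    upperRowProd f i = f i k * ∏ j ∈ univ.filter (fun j => i < j ∧ j < k), f i j := by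
  have hsplit : univ.filter (i < ·) = insert k (univ.filter (fun j => i < j ∧ j < k)) := by
    ext j
    simp only [mem_filter, mem_univ, true_and, mem_insert]
    constructor
    · intro hij
      rcases (hk j).lt_or_eq with hjk | rfl
      exacts [Or.inr ⟨hij, hjk⟩, Or.inl rfl]
    · rintro (rfl | ⟨hij, _⟩)
      exacts [hik, hij]
  rw [upperRowProd, hsplit, prod_insert (by simp)]

theorem upperColProd_eq_upperRowProd_of_eq_mul_prod_inv (hf : ∀ i j, i < j → f i j ≠ 0)
    {k i : ι} (hk : IsTop k) (hik : i < k)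
    (h : f i k = upperColProd f i * ∏ j ∈ univ.filter (fun j => i < j ∧ j < k), (f i j)⁻¹) :
    upperColProd f i = upperRowProd f i := by
  have hne : ∏ j ∈ univ.filter (fun j => i < j ∧ j < k), f i j ≠ 0 :=
    prod_ne_zero_iff.2 fun j hj => hf i j (mem_filter.1 hj).2.1
  rw [upperRowProd_eq_mul_prod hk hik, h, prod_inv_distrib, inv_mul_cancel_right₀ hne]

end CommGroupWithZero

end UpperTriangular

/-- **Computation for Proposition C (i).**  For `ε ∈ {0,1}ⁿ`, if
`q_{in} = (∏_{p<i} q_{pi}) · (∏_{i<p≤n−1} q_{ip}⁻¹)` for all `1 ≤ i ≤ n−1` (0-based: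
all `i < n-1`, the last index playing the role of `n`), then
`∏_{i<j} q_{ij}^{ε_j − ε_i} = 1`. -/
theorem stmt12 (K : Type) [Field K] (n : ℕ) (hn : 2 ≤ n)
    (q : Fin n → Fin n → K) (hq : ∀ i j : Fin n, i < j → q i j ≠ 0)
    (ε : Fin n → ℤ)
    (hcond : ∀ i : Fin n, (i : ℕ) < n - 1 →
        q i ⟨n - 1, by omega⟩ =
          (∏ p ∈ univ.filter (fun p : Fin n => p < i), q p i) *
          (∏ p ∈ univ.filter (fun p : Fin n => i < p ∧ (p : ℕ) < n - 1), (q i p)⁻¹)) :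
    (∏ p ∈ univ.filter (fun p : Fin n × Fin n => p.1 < p.2),
        q p.1 p.2 ^ (ε p.2 - ε p.1)) = 1 := by
  set last : Fin n := ⟨n - 1, by omega⟩
  have hlast : IsTop last := fun i => Fin.le_def.2 (by simp only [last]; omega)
  refine prod_filter_lt_zpow_sub_eq_one hq ε
    (upperColProd_eq_upperRowProd_of_forall_ne (k := last) hq fun i hi => ?_)
  have hil : i < last := lt_of_le_of_ne (hlast i) hi
  exact upperColProd_eq_upperRowProd_of_eq_mul_prod_inv hq hlast hil (hcond i hil)
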